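/- arXiv:1604.04174 — 5 statements merged into one kernel-verified Lean document; each statement's English description precedes it below -/
import Mathlib

section
/- Let $f = (f_1,\dots,f_N)$ and $g = (g_1,\dots,g_N)$ be triangular tuples of polynomials over a field $k$. Then the degree matrix of the composition satisfies the entrywise inequality $\mathrm{Deg}(f \circ g) \le \mathrm{Deg}(g)\,\mathrm{Deg}(f)$; that is, for all $1 \le i,j \le N$, $\deg_{x_i}\big(f_j(g_1,\dots,g_N)\big) \le \sum_{l=1}^{N} \deg_{x_i}(g_l) \cdot \deg_{x_l}(f_j)$. -/
open MvPolynomial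

/-- For triangular tuples `f`, `g` of polynomials over a field `k`
(i.e. `fᵢ` involves only the variables `xᵢ, …, x_N`), the degree matrix of the composition
satisfies `Deg(f ∘ g) ≤ Deg(g) * Deg(f)` entrywise, i.e. for all `i, j`:
`deg_{xᵢ}(f_j(g₁,…,g_N)) ≤ ∑ l, deg_{xᵢ}(g_l) * deg_{x_l}(f_j)`. -/
theorem degreeOf_comp_le_sum
    {k : Type*} [Field k] {N : ℕ}
    (f g : Fin N → MvPolynomial (Fin N) k)
    (hf : ∀ i j : Fin N, j < i → degreeOf j (f i) = 0)
    (hg : ∀ i j : Fin N, j < i → degreeOf j (g i) = 0)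
    (i j : Fin N) :
    degreeOf i (bind₁ g (f j)) ≤ ∑ l : Fin N, degreeOf i (g l) * degreeOf l (f j) := by
  classical
  conv_lhs => rw [(f j).as_sum]
  rw [map_sum]
  refine (degreeOf_sum_le _ _ _).trans (Finset.sup_le fun m hm => ?_)
  rw [bind₁_monomial]
  refine (degreeOf_mul_le _ _ _).trans ?_
  rw [degreeOf_C, zero_add]
  calc degreeOf i (∏ l ∈ m.support, g l ^ m l)
      ≤ ∑ l ∈ m.support, degreeOf i (g l ^ m l) := degreeOf_prod_le _ _ _
    _ ≤ ∑ l ∈ m.support, degreeOf i (g l) * degreeOf l (f j) := by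
        refine Finset.sum_le_sum fun l _ => ?_
        refine (degreeOf_pow_le _ _ _).trans ?_
        rw [mul_comm]
        exact Nat.mul_le_mul_left _ (monomial_le_degreeOf l hm)
    _ ≤ ∑ l : Fin N, degreeOf i (g l) * degreeOf l (f j) :=
        Finset.sum_le_sum_of_subset (Finset.subset_univ _)
end

section
/- Let $f = (f_1,\dots,f_N)$ and $g = (g_1,\dots,g_N)$ be triangular tuples of polynomials over a field $k$, and assume that $f_1,\dots,f_N$ are algebraically independent over $k$ and that $g_1,\dots,g_N$ are algebraically independent over $k$. Then for every $1 \le i \le N$, $\deg_{x_i}\big(f_i(g_1,\dots,g_N)\big) = \deg_{x_i}(f_i) \cdot \deg_{x_i}(g_i)$; that is, the diagonal entries of the degree matrix are multiplicative under composition. -/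
/-!
Write `fᵢ` as a polynomial `P` in `xᵢ` whose coefficients involve only `xᵢ₊₁, …, x_N`.
Substituting `g` sends these coefficients to polynomials in `gᵢ₊₁, …, g_N`, which are free of `xᵢ`,
so as a polynomial in `xᵢ`, `fᵢ(g)` is the one-variable composition `Pᵟ ∘ gᵢ`, where `Pᵟ` is `P`
with the substitution applied to its coefficients. Over a domain `deg (Pᵟ ∘ gᵢ) = deg Pᵟ · deg gᵢ`,
and algebraic independence of the `gⱼ` keeps the leading coefficient of `P` nonzero, so
`deg Pᵟ = deg_{xᵢ} fᵢ`.
-/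

open MvPolynomial

theorem Polynomial.natDegree_eval₂_eq_mul {A B : Type*} [CommSemiring A] [CommSemiring B]
    [NoZeroDivisors B] {γ : A →+* Polynomial B} (hγ : Function.Injective γ)
    (P : Polynomial A) (Q : Polynomial B) (hconst : ∀ m, (γ (P.coeff m)).natDegree = 0) :
    (P.eval₂ γ Q).natDegree = P.natDegree * Q.natDegree := by
  by_cases hP : P = 0
  · simp [hP]
  set δ : A →+* B := constantCoeff.comp γ
  have hγδ : ∀ m, γ (P.coeff m) = C (δ (P.coeff m)) := fun m =>
    eq_C_of_natDegree_eq_zero (hconst m)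
  have hcomp : P.eval₂ γ Q = (P.map δ).comp Q := by
    rw [comp, eval₂_map, eval₂_eq_sum_range, eval₂_eq_sum_range]
    refine Finset.sum_congr rfl fun m _ => ?_
    rw [RingHom.comp_apply, ← hγδ]
  have hlead : δ P.leadingCoeff ≠ 0 := by
    intro h0
    apply leadingCoeff_ne_zero.mpr hP
    apply hγ
    rw [map_zero, leadingCoeff, hγδ, ← leadingCoeff, h0, map_zero]
  rw [hcomp, natDegree_comp, natDegree_map_of_leadingCoeff_ne_zero δ hlead]

namespace MvPolynomial

variable {R σ τ : Type*}

theorem degreeOf_bind₁_eq_zero [CommSemiring R] [DecidableEq τ] {f : σ → MvPolynomial τ R}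
    {p : MvPolynomial σ R} {b : τ} (h : ∀ j ∈ p.vars, degreeOf b (f j) = 0) :
    degreeOf b (bind₁ f p) = 0 := by
  by_contra hb
  obtain ⟨j, hj, hbj⟩ :=
    Finset.mem_biUnion.mp (vars_bind₁ f p (mem_vars_iff_degreeOf_ne_zero.mpr hb))
  exact mem_vars_iff_degreeOf_ne_zero.mp hbj (h j hj)

section polynomialInEquiv

variable (R) [CommSemiring R] [DecidableEq σ]

noncomputable def polynomialInEquiv (a : σ) :
    MvPolynomial σ R ≃ₐ[R] Polynomial (MvPolynomial {b // b ≠ a} R) :=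
  (renameEquiv R (Equiv.optionSubtypeNe a).symm).trans (optionEquivLeft R {b // b ≠ a})

variable {R}

@[simp]
theorem natDegree_polynomialInEquiv (a : σ) (p : MvPolynomial σ R) :
    (polynomialInEquiv R a p).natDegree = degreeOf a p :=
  (degreeOf_eq_natDegree a p).symm

@[simp]
theorem polynomialInEquiv_C (a : σ) (r : R) :
    polynomialInEquiv R a (C r) = Polynomial.C (C r) := by
  simp [polynomialInEquiv, optionEquivLeft_C]

@[simp]
theorem polynomialInEquiv_X_self (a : σ) : polynomialInEquiv R a (X a) = Polynomial.X := by
  simp [polynomialInEquiv, optionEquivLeft_X_none]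

theorem polynomialInEquiv_X_of_ne {a b : σ} (h : b ≠ a) :
    polynomialInEquiv R a (X b) = Polynomial.C (X ⟨b, h⟩) := by
  simp [polynomialInEquiv, Equiv.optionSubtypeNe_symm_of_ne h, optionEquivLeft_X_some]

theorem mem_vars_of_mem_vars_coeff_polynomialInEquiv {a : σ} {p : MvPolynomial σ R} {m : ℕ}
    {t : {b // b ≠ a}} (ht : t ∈ ((polynomialInEquiv R a p).coeff m).vars) :
    (t : σ) ∈ p.vars := by
  obtain ⟨d, hd, hdt⟩ := (mem_vars_iff_mem_support t).mp ht
  have hsome : some t ∈ (rename (Equiv.optionSubtypeNe a).symm p).vars :=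
    (mem_vars_iff_mem_support _).mpr
      ⟨d.optionElim m, (mem_support_coeff_optionEquivLeft R).mp hd, by simpa using hdt⟩
  obtain ⟨s, hs, hst⟩ := mem_vars_rename _ p hsome
  obtain rfl : s = t := by simpa using (Equiv.symm_apply_eq _).mp hst
  exact hs

theorem polynomialInEquiv_bind₁ [DecidableEq τ] (g : σ → MvPolynomial τ R) (a : σ) (b : τ)
    (p : MvPolynomial σ R) :
    polynomialInEquiv R b (bind₁ g p) =
      (polynomialInEquiv R a p).eval₂
        (((polynomialInEquiv R b).toAlgHom.comp (aeval fun j : {j // j ≠ a} => g j) :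
          MvPolynomial {j // j ≠ a} R →+* _))
        (polynomialInEquiv R b (g a)) := by
  induction p using MvPolynomial.induction_on with
  | C r => simp
  | add p q hp hq => simp only [map_add, Polynomial.eval₂_add, hp, hq]
  | mul_X p j hp =>
    simp only [map_mul, Polynomial.eval₂_mul, hp, bind₁_X_right]
    congr 1
    by_cases hj : j = a
    · subst hj; simp
    · simp [polynomialInEquiv_X_of_ne hj]

end polynomialInEquiv

theorem degreeOf_bind₁_eq_mul [CommRing R] [IsDomain R] [DecidableEq σ] [DecidableEq τ]
    (g : σ → MvPolynomial τ R) (p : MvPolynomial σ R) (a : σ) (b : τ)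
    (hvars : ∀ j ∈ p.vars, j ≠ a → degreeOf b (g j) = 0)
    (hinj : Function.Injective (aeval (R := R) fun j : {j // j ≠ a} => g j)) :
    degreeOf b (bind₁ g p) = degreeOf a p * degreeOf b (g a) := by
  simp only [← natDegree_polynomialInEquiv, polynomialInEquiv_bind₁ g a b]
  refine Polynomial.natDegree_eval₂_eq_mul ((polynomialInEquiv R b).injective.comp hinj) _ _
    fun m => ?_
  rw [RingHom.coe_coe, AlgHom.comp_apply, AlgEquiv.coe_toAlgHom, natDegree_polynomialInEquiv,
    aeval_eq_bind₁]
  exact degreeOf_bind₁_eq_zero fun t ht =>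
    hvars t (mem_vars_of_mem_vars_coeff_polynomialInEquiv ht) t.2

end MvPolynomial

theorem degreeOf_diag_comp_eq_mul_general
    {k : Type*} [Field k] {N : ℕ}
    (f g : Fin N → MvPolynomial (Fin N) k)
    (hf : ∀ i j : Fin N, j < i → degreeOf j (f i) = 0)
    (hg : ∀ i j : Fin N, j < i → degreeOf j (g i) = 0)
    (hgind : AlgebraicIndependent k g)
    (i : Fin N) :
    degreeOf i (bind₁ g (f i)) = degreeOf i (f i) * degreeOf i (g i) := by
  refine degreeOf_bind₁_eq_mul g (f i) i i (fun j hj hji => hg j i ?_) ?_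
  · have : ¬ j < i := fun hlt => mem_vars_iff_degreeOf_ne_zero.mp hj (hf i j hlt)
    omega
  · exact algebraicIndependent_iff_injective_aeval.mp (hgind.comp _ Subtype.val_injective)

/-- For triangular tuples `f`, `g` of polynomials over a field `k`
whose components are algebraically independent over `k`, the diagonal entries of the degree
matrix are multiplicative under composition:
`deg_{xᵢ}(fᵢ(g₁,…,g_N)) = deg_{xᵢ}(fᵢ) * deg_{xᵢ}(gᵢ)`. -/
theorem degreeOf_diag_comp_eq_mul
    {k : Type*} [Field k] {N : ℕ}
    (f g : Fin N → MvPolynomial (Fin N) k)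
    (hf : ∀ i j : Fin N, j < i → degreeOf j (f i) = 0)
    (hg : ∀ i j : Fin N, j < i → degreeOf j (g i) = 0)
    (hfind : AlgebraicIndependent k f)
    (hgind : AlgebraicIndependent k g)
    (i : Fin N) :
    degreeOf i (bind₁ g (f i)) = degreeOf i (f i) * degreeOf i (g i) :=
  degreeOf_diag_comp_eq_mul_general f g hf hg hgind i
end

section
/- Let $f = (f_1,\dots,f_N)$ be a triangular tuple of polynomials over a field $k$. Then for every $n \ge 0$, the degree matrix of the $n$-fold self-composition satisfies the entrywise inequality $\mathrm{Deg}(f^{\circ n}) \le \mathrm{Deg}(f)^n$; that is, for all $1 \le i,j \le N$, $\deg_{x_i}\big((f^{\circ n})_j\big)$ is at most the $(i,j)$-th entry of the $n$-th matrix power of $\mathrm{Deg}(f)$. -/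
open MvPolynomial

/-- The `n`-fold self-composition of a tuple of multivariate polynomials:
`(f^∘0)ᵢ = Xᵢ` and `(f^∘(n+1))ⱼ = fⱼ((f^∘n)₁, …, (f^∘n)_N)`. -/
noncomputable def iterComp {k : Type*} [CommSemiring k] {N : ℕ}
    (f : Fin N → MvPolynomial (Fin N) k) : ℕ → Fin N → MvPolynomial (Fin N) k
  | 0 => fun i => X i
  | n + 1 => fun i => bind₁ (iterComp f n) (f i)

lemma degreeOf_bind₁_le {k : Type*} [Field k] {N : ℕ}
    (g : Fin N → MvPolynomial (Fin N) k) (i : Fin N)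
    (p : MvPolynomial (Fin N) k) :
    degreeOf i (bind₁ g p) ≤ ∑ l, degreeOf l p * degreeOf i (g l) := by
  classical
  conv_lhs => rw [p.as_sum, map_sum]
  refine (degreeOf_sum_le _ _ _).trans (Finset.sup_le fun d hd => ?_)
  rw [bind₁_monomial]
  refine (degreeOf_mul_le _ _ _).trans ?_
  rw [degreeOf_C, zero_add]
  refine (degreeOf_prod_le _ _ _).trans ?_
  calc ∑ l ∈ d.support, degreeOf i (g l ^ d l)
      ≤ ∑ l ∈ d.support, d l * degreeOf i (g l) :=
        Finset.sum_le_sum fun l _ => degreeOf_pow_le i (g l) (d l)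
    _ ≤ ∑ l ∈ d.support, degreeOf l p * degreeOf i (g l) :=
        Finset.sum_le_sum fun l hl =>
          Nat.mul_le_mul_right _ (monomial_le_degreeOf l hd)
    _ ≤ ∑ l, degreeOf l p * degreeOf i (g l) :=
        Finset.sum_le_sum_of_subset (Finset.subset_univ _)

/-- Let `f` be a triangular tuple of polynomials over a field `k`, with
degree matrix `Deg(f)ᵢⱼ = deg_{xᵢ}(fⱼ)`. Then for every `n ≥ 0`, the degree matrix of the
`n`-fold self-composition satisfies `Deg(f^∘n) ≤ Deg(f)^n` entrywise. -/
theorem degreeOf_iterComp_le_matrix_pow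
    {k : Type*} [Field k] {N : ℕ}
    (f : Fin N → MvPolynomial (Fin N) k)
    (hf : ∀ i j : Fin N, j < i → degreeOf j (f i) = 0)
    (D : Matrix (Fin N) (Fin N) ℕ)
    (hD : ∀ i j : Fin N, D i j = degreeOf i (f j))
    (n : ℕ) (i j : Fin N) :
    degreeOf i (iterComp f n j) ≤ (D ^ n) i j := by
  induction n generalizing i j with
  | zero =>
      simp only [iterComp, pow_zero, Matrix.one_apply]
      by_cases h : i = j
      · subst h; simp [degreeOf_X]
      · simp [h, degreeOf_X, Ne.symm h]
  | succ n ih =>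
      show degreeOf i (bind₁ (iterComp f n) (f j)) ≤ _
      refine (degreeOf_bind₁_le _ _ _).trans ?_
      rw [pow_succ, Matrix.mul_apply]
      refine Finset.sum_le_sum fun l _ => ?_
      rw [mul_comm, hD l j]
      exact Nat.mul_le_mul_right _ (ih i l)
end

section
/- Let $f = (f_1,\dots,f_N)$ be a triangular tuple of polynomials over a field $k$ such that $f_1,\dots,f_N$ are algebraically independent over $k$. For each $n \ge 1$ define $\deg(f^{\circ n}) := \max_{1 \le j \le N} \operatorname{totalDegree}\big((f^{\circ n})_j\big)$, the maximum of the total degrees of the components of the $n$-fold self-composition. Then the limit $\lim_{n\to\infty} \big(\deg(f^{\circ n})\big)^{1/n}$ exists and is equal to $\max_{1 \le i \le N} \deg_{x_i} f_i$. -/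
/-!
Let `d = maxᵢ deg_{xᵢ} fᵢ`, attained at `i₀`, and regard polynomials as univariate in `x_{i₀}`
with coefficients in all of `k[x]`. By triangularity `(f^∘n)ⱼ` is free of `x_{i₀}` for `j > i₀`,
so `(f^∘(n+1))_{i₀}` is `f_{i₀}`, with its coefficients pushed through `bind₁ (f^∘n)`, composed
with `(f^∘n)_{i₀}`. Algebraic independence makes `bind₁ (f^∘n)` injective, so no leading
coefficient dies and `deg_{x_{i₀}} (f^∘n)_{i₀} = d ^ n`, a lower bound for `deg (f^∘n)`.
Conversely, with `M = deg f`, `deg (f^∘(n+1))ᵢ ≤ d · deg (f^∘n)ᵢ + M · max_{j > i} deg (f^∘n)ⱼ`,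
and since `d ≥ 1` (the last component is not constant) induction gives
`deg (f^∘n)ᵢ ≤ ((M + 1)(n + 1)) ^ (N - i) · d ^ n`. Taking `n`-th roots, both bounds tend to `d`.
-/

open MvPolynomial

section maxDegree

variable {R σ ι : Type*} [CommSemiring R]

noncomputable def maxTotalDegree [Fintype ι] (f : ι → MvPolynomial σ R) : ℕ :=
  Finset.univ.sup fun i => (f i).totalDegree

noncomputable def maxDiagDegreeOf [Fintype σ] (f : σ → MvPolynomial σ R) : ℕ :=
  Finset.univ.sup fun i => degreeOf i (f i)

end maxDegree

theorem AlgebraicIndependent.bind₁ {R ι σ τ : Type*} [CommRing R] {f : ι → MvPolynomial σ R}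
    {g : σ → MvPolynomial τ R} (hf : AlgebraicIndependent R f)
    (hg : AlgebraicIndependent R g) : AlgebraicIndependent R fun i => bind₁ g (f i) := by
  rw [algebraicIndependent_iff_injective_aeval] at hf hg ⊢
  rw [← comp_aeval]
  exact hg.comp hf

namespace MvPolynomial

section polynomialIn

variable {R σ : Type*} [CommSemiring R] [DecidableEq σ]

-- The coefficients stay in the full ring `MvPolynomial σ R`, so that `bind₁ g` can act on them.
noncomputable def polynomialIn (a : σ) : MvPolynomial σ R →ₐ[R] Polynomial (MvPolynomial σ R) :=
  aeval fun b => if b = a then Polynomial.X else Polynomial.C (X b)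

@[simp]
theorem polynomialIn_C (a : σ) (r : R) :
    polynomialIn a (C r : MvPolynomial σ R) = Polynomial.C (C r) :=
  (polynomialIn a).commutes r

@[simp]
theorem polynomialIn_X_self (a : σ) : polynomialIn a (X a : MvPolynomial σ R) = Polynomial.X := by
  simp [polynomialIn]

theorem polynomialIn_X_of_ne {a b : σ} (h : b ≠ a) :
    polynomialIn a (X b : MvPolynomial σ R) = Polynomial.C (X b) := by
  simp [polynomialIn, h]

theorem polynomialIn_eq_map_optionEquivLeft (a : σ) :
    (polynomialIn a : MvPolynomial σ R →ₐ[R] _) =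
      (Polynomial.mapAlgHom (rename Subtype.val)).comp
        ((optionEquivLeft R {b // b ≠ a}).toAlgHom.comp
          (rename (Equiv.optionSubtypeNe a).symm)) := by
  refine algHom_ext fun b => ?_
  rcases eq_or_ne b a with rfl | hb
  · simp [optionEquivLeft_X_none]
  · simp [polynomialIn_X_of_ne hb, Equiv.optionSubtypeNe_symm_of_ne hb, optionEquivLeft_X_some]

theorem natDegree_polynomialIn (a : σ) (p : MvPolynomial σ R) :
    (polynomialIn a p).natDegree = degreeOf a p := by
  rw [polynomialIn_eq_map_optionEquivLeft, degreeOf_eq_natDegree]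
  exact Polynomial.natDegree_map_eq_of_injective (rename_injective _ Subtype.val_injective) _

theorem eval_X_polynomialIn (a : σ) (p : MvPolynomial σ R) :
    (polynomialIn a p).eval (X a) = p := by
  have : (Polynomial.evalRingHom (X a)).comp (polynomialIn a).toRingHom =
      RingHom.id (MvPolynomial σ R) := by
    refine ringHom_ext (fun r => ?_) fun b => ?_
    · simp
    · rcases eq_or_ne b a with rfl | hb
      · simp
      · simp [polynomialIn_X_of_ne hb]
  exact RingHom.congr_fun this p

theorem polynomialIn_eq_C {a : σ} {p : MvPolynomial σ R} (h : degreeOf a p = 0) :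
    polynomialIn a p = Polynomial.C p := by
  obtain ⟨c, hc⟩ := Polynomial.natDegree_eq_zero.mp ((natDegree_polynomialIn a p).trans h)
  rw [← hc, ← eval_X_polynomialIn a p, ← hc, Polynomial.eval_C]

theorem polynomialIn_bind₁ {a : σ} {g : σ → MvPolynomial σ R} {p : MvPolynomial σ R}
    (hg : ∀ b ∈ p.vars, b ≠ a → degreeOf a (g b) = 0) :
    polynomialIn a (bind₁ g p) =
      ((polynomialIn a p).map (bind₁ g)).comp (polynomialIn a (g a)) := by
  rw [Polynomial.comp, Polynomial.eval₂_map]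
  refine hom_congr_vars (f₁ := (polynomialIn a).toRingHom.comp (bind₁ g).toRingHom)
    (f₂ := (Polynomial.eval₂RingHom (Polynomial.C.comp (bind₁ g).toRingHom)
      (polynomialIn a (g a))).comp (polynomialIn a).toRingHom) ?_ (fun b hb _ => ?_) rfl
  · refine RingHom.ext fun r => ?_
    simp
  · rcases eq_or_ne b a with rfl | hba
    · simp
    · simp [polynomialIn_X_of_ne hba, polynomialIn_eq_C (hg b hb hba)]

end polynomialIn

theorem degreeOf_bind₁_of_injective {R σ : Type*} [CommRing R] [IsDomain R] [DecidableEq σ]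
    {a : σ} {g : σ → MvPolynomial σ R} {p : MvPolynomial σ R} (hinj : Function.Injective (bind₁ g))
    (hg : ∀ b ∈ p.vars, b ≠ a → degreeOf a (g b) = 0) :
    degreeOf a (bind₁ g p) = degreeOf a p * degreeOf a (g a) := by
  simp only [← natDegree_polynomialIn, polynomialIn_bind₁ hg, Polynomial.natDegree_comp]
  exact congrArg (· * _) (Polynomial.natDegree_map_eq_of_injective hinj _)

section totalDegree

variable {R σ τ : Type*} [CommSemiring R]

theorem totalDegree_X_le (i : σ) : (X i : MvPolynomial σ R).totalDegree ≤ 1 :=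
  (totalDegree_monomial_le _ _).trans (by simp)

theorem totalDegree_bind₁_le (g : σ → MvPolynomial τ R) (p : MvPolynomial σ R) :
    (bind₁ g p).totalDegree ≤ p.support.sup fun m => m.sum fun j e => e * (g j).totalDegree := by
  conv_lhs => rw [p.as_sum, map_sum]
  refine totalDegree_finsetSum_le fun m hm => le_trans ?_ (Finset.le_sup hm)
  rw [bind₁_monomial]
  calc (C (coeff m p) * ∏ j ∈ m.support, g j ^ m j).totalDegree
      ≤ 0 + ∑ j ∈ m.support, (g j ^ m j).totalDegree :=
        (totalDegree_mul _ _).trans (add_le_add (totalDegree_C _).le (totalDegree_finsetProd _ _))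
    _ ≤ m.sum fun j e => e * (g j).totalDegree := by
        rw [zero_add]
        exact Finset.sum_le_sum fun j _ => totalDegree_pow _ _

theorem totalDegree_bind₁_le_degreeOf_mul_add {g : σ → MvPolynomial τ R}
    {p : MvPolynomial σ R} (a : σ) {T : ℕ} (hT : ∀ b ∈ p.vars, b ≠ a → (g b).totalDegree ≤ T) :
    (bind₁ g p).totalDegree ≤ degreeOf a p * (g a).totalDegree + p.totalDegree * T := by
  classical
  refine (totalDegree_bind₁_le g p).trans (Finset.sup_le fun m hm => ?_)
  rw [← Finsupp.add_sum_erase' m a (fun j e => e * (g j).totalDegree) fun _ => zero_mul _]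
  refine add_le_add (Nat.mul_le_mul_right _ (monomial_le_degreeOf a hm)) ?_
  calc (m.erase a).sum (fun j e => e * (g j).totalDegree)
      ≤ (m.erase a).sum fun _ e => e * T := by
        refine Finset.sum_le_sum fun j hj => Nat.mul_le_mul_left _ ?_
        rw [Finsupp.support_erase, Finset.mem_erase] at hj
        exact hT j ((mem_vars_iff_mem_support j).mpr ⟨m, hm, hj.2⟩) hj.1
    _ ≤ p.totalDegree * T := by
        rw [← Finsupp.sum_mul]
        refine Nat.mul_le_mul_right _ ((le_totalDegree hm).trans' ?_)
        rw [← Finsupp.add_sum_erase' m a (fun _ e => e) fun _ => rfl]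
        exact Nat.le_add_left _ _

end totalDegree

section IsTriangular

variable {R σ : Type*} [CommSemiring R] [LinearOrder σ]

def IsTriangular (f : σ → MvPolynomial σ R) : Prop :=
  ∀ i j : σ, j < i → degreeOf j (f i) = 0

theorem IsTriangular.le_of_mem_vars {f : σ → MvPolynomial σ R} (hf : IsTriangular f) {i j : σ}
    (hj : j ∈ (f i).vars) : i ≤ j :=
  not_lt.mp fun hji => mem_vars_iff_degreeOf_ne_zero.mp hj (hf i j hji)

theorem IsTriangular.bind₁ {f g : σ → MvPolynomial σ R} (hf : IsTriangular f)
    (hg : IsTriangular g) : IsTriangular fun i => bind₁ g (f i) := by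
  intro i j hji
  by_contra hne
  obtain ⟨b, hb, hjb⟩ := mem_vars_bind₁ g (f i) (mem_vars_iff_degreeOf_ne_zero.mpr hne)
  exact (hji.trans_le (hf.le_of_mem_vars hb)).not_ge (hg.le_of_mem_vars hjb)

end IsTriangular

section AlgebraicIndependent

variable {R σ : Type*} [CommRing R] [Nontrivial R] [LinearOrder σ]

theorem IsTriangular.degreeOf_ne_zero_of_isMax {f : σ → MvPolynomial σ R} (hf : IsTriangular f)
    (hind : AlgebraicIndependent R f) {i : σ} (hi : IsMax i) : degreeOf i (f i) ≠ 0 := by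
  intro h0
  have hvars : (f i).vars = ∅ := Finset.eq_empty_of_forall_notMem fun j hj => by
    have hij := hf.le_of_mem_vars hj
    rw [le_antisymm (hi hij) hij] at hj
    exact mem_vars_iff_degreeOf_ne_zero.mp hj h0
  apply hind.transcendental i
  rw [vars_eq_empty_iff_eq_C.mp hvars]
  exact isAlgebraic_algebraMap _

theorem IsTriangular.one_le_maxDiagDegreeOf [Fintype σ] [Nonempty σ] {f : σ → MvPolynomial σ R}
    (hf : IsTriangular f) (hind : AlgebraicIndependent R f) : 1 ≤ maxDiagDegreeOf f := by
  let i := (Finset.univ : Finset σ).max' Finset.univ_nonempty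
  have hi : IsMax i := fun j _ => Finset.le_max' _ j (Finset.mem_univ j)
  exact (Nat.one_le_iff_ne_zero.mpr (hf.degreeOf_ne_zero_of_isMax hind hi)).trans
    (Finset.le_sup (f := fun i => degreeOf i (f i)) (Finset.mem_univ i))

end AlgebraicIndependent

end MvPolynomial

section iterComp

variable {R : Type*} {N : ℕ}

theorem iterComp_succ [CommSemiring R] (f : Fin N → MvPolynomial (Fin N) R) (n : ℕ) (i : Fin N) :
    iterComp f (n + 1) i = bind₁ (iterComp f n) (f i) :=
  rfl

theorem isTriangular_iterComp [CommSemiring R] {f : Fin N → MvPolynomial (Fin N) R}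
    (hf : IsTriangular f) (n : ℕ) : IsTriangular (iterComp f n) := by
  induction n with
  | zero => exact fun i j hji => degreeOf_X_of_ne hji.ne
  | succ n ih => exact hf.bind₁ ih

theorem algebraicIndependent_iterComp [CommRing R] {f : Fin N → MvPolynomial (Fin N) R}
    (hf : AlgebraicIndependent R f) (n : ℕ) : AlgebraicIndependent R (iterComp f n) := by
  induction n with
  | zero => exact algebraicIndependent_X (Fin N) R
  | succ n ih => exact hf.bind₁ ih

theorem MvPolynomial.IsTriangular.degreeOf_iterComp_self [CommRing R] [IsDomain R]
    {f : Fin N → MvPolynomial (Fin N) R} (hf : IsTriangular f) (hind : AlgebraicIndependent R f)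
    (n : ℕ) (i : Fin N) : degreeOf i (iterComp f n i) = degreeOf i (f i) ^ n := by
  induction n with
  | zero => simp [iterComp]
  | succ n ih =>
    rw [iterComp_succ, degreeOf_bind₁_of_injective
      (algebraicIndependent_iff_injective_aeval.mp (algebraicIndependent_iterComp hind n)), ih,
      pow_succ']
    exact fun b hb hbi => isTriangular_iterComp hf n b i ((hf.le_of_mem_vars hb).lt_of_ne hbi.symm)

theorem MvPolynomial.IsTriangular.pow_maxDiagDegreeOf_le [CommRing R] [IsDomain R]
    [Nonempty (Fin N)] {f : Fin N → MvPolynomial (Fin N) R} (hf : IsTriangular f)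
    (hind : AlgebraicIndependent R f) (n : ℕ) :
    maxDiagDegreeOf f ^ n ≤ maxTotalDegree (iterComp f n) := by
  obtain ⟨i, -, hi⟩ :=
    Finset.exists_mem_eq_sup (Finset.univ : Finset (Fin N)) Finset.univ_nonempty
      fun i => degreeOf i (f i)
  calc maxDiagDegreeOf f ^ n = degreeOf i (iterComp f n i) := by
        rw [hf.degreeOf_iterComp_self hind, maxDiagDegreeOf, hi]
    _ ≤ (iterComp f n i).totalDegree := degreeOf_le_totalDegree _ _
    _ ≤ maxTotalDegree (iterComp f n) :=
        Finset.le_sup (f := fun j => (iterComp f n j).totalDegree) (Finset.mem_univ i)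

theorem MvPolynomial.IsTriangular.totalDegree_iterComp_le [CommSemiring R]
    {f : Fin N → MvPolynomial (Fin N) R} (hf : IsTriangular f) (hd : 1 ≤ maxDiagDegreeOf f)
    (n : ℕ) (i : Fin N) :
    (iterComp f n i).totalDegree ≤
      ((maxTotalDegree f + 1) * (n + 1)) ^ (N - i) * maxDiagDegreeOf f ^ n := by
  set d := maxDiagDegreeOf f
  set K := maxTotalDegree f + 1
  induction n generalizing i with
  | zero =>
    calc (iterComp f 0 i).totalDegree ≤ 1 := totalDegree_X_le i
      _ ≤ ((K * (0 + 1)) ^ (N - i) * d ^ 0) := by simp [Nat.one_le_pow, K]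
  | succ n ih =>
    obtain ⟨e, he⟩ : ∃ e, N - i = e + 1 := ⟨N - i - 1, by omega⟩
    have hT (b : Fin N) (hb : b ∈ (f i).vars) (hbi : b ≠ i) :
        (iterComp f n b).totalDegree ≤ (K * (n + 1)) ^ e * d ^ n := by
      have : i < b := (hf.le_of_mem_vars hb).lt_of_ne hbi.symm
      exact (ih b).trans (Nat.mul_le_mul_right _ (Nat.pow_le_pow_right (by positivity) (by omega)))
    have hdi : degreeOf i (f i) ≤ d :=
      Finset.le_sup (f := fun i => degreeOf i (f i)) (Finset.mem_univ i)
    have hKi : (f i).totalDegree ≤ K :=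
      Nat.le_succ_of_le (Finset.le_sup (f := fun i => (f i).totalDegree) (Finset.mem_univ i))
    have hdn : d ^ n ≤ d ^ (n + 1) := Nat.pow_le_pow_right hd (Nat.le_succ n)
    have hi : (iterComp f n i).totalDegree ≤ (K * (n + 1)) ^ (e + 1) * d ^ n := he ▸ ih i
    calc (iterComp f (n + 1) i).totalDegree
        ≤ degreeOf i (f i) * (iterComp f n i).totalDegree
          + (f i).totalDegree * ((K * (n + 1)) ^ e * d ^ n) :=
          totalDegree_bind₁_le_degreeOf_mul_add i hT
      _ ≤ d * ((K * (n + 1)) ^ (e + 1) * d ^ n) + K * ((K * (n + 1)) ^ e * d ^ n) := by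
          gcongr
      _ = (K * (n + 1)) ^ e * (d ^ (n + 1) * (K * (n + 1)) + K * d ^ n) := by ring
      _ ≤ (K * (n + 1)) ^ e * (d ^ (n + 1) * (K * (n + 1)) + K * d ^ (n + 1)) := by gcongr
      _ = (K * (n + 1)) ^ e * (K * (n + 2)) * d ^ (n + 1) := by ring
      _ ≤ (K * (n + 2)) ^ e * (K * (n + 2)) * d ^ (n + 1) := by gcongr; omega
      _ = (K * (n + 1 + 1)) ^ (N - i) * d ^ (n + 1) := by rw [he]; ring

theorem MvPolynomial.IsTriangular.maxTotalDegree_iterComp_le [CommSemiring R]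
    {f : Fin N → MvPolynomial (Fin N) R} (hf : IsTriangular f) (hd : 1 ≤ maxDiagDegreeOf f)
    (n : ℕ) :
    maxTotalDegree (iterComp f n) ≤
      ((maxTotalDegree f + 1) * (n + 1)) ^ N * maxDiagDegreeOf f ^ n :=
  Finset.sup_le fun i _ => (hf.totalDegree_iterComp_le hd n i).trans <|
    Nat.mul_le_mul_right _ (Nat.pow_le_pow_right (by positivity) (Nat.sub_le N i))

end iterComp

open Filter Topology

theorem tendsto_rpow_one_div_of_pow_le_of_le {a : ℕ → ℝ} {d C : ℝ} {K : ℕ} (hd : 0 ≤ d)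
    (hC : 0 < C) (hlow : ∀ n, d ^ n ≤ a n) (hup : ∀ n, a n ≤ (C * (n + 1)) ^ K * d ^ n) :
    Tendsto (fun n : ℕ => a n ^ (1 / (n : ℝ))) atTop (𝓝 d) := by
  have hroot {x : ℝ} {n : ℕ} (hx : 0 ≤ x) (hn : n ≠ 0) : (x ^ n) ^ (1 / (n : ℝ)) = x := by
    rw [one_div, Real.pow_rpow_inv_natCast hx hn]
  have hC1 : Tendsto (fun n : ℕ => C ^ (1 / (n : ℝ))) atTop (𝓝 1) := by
    simpa using tendsto_const_nhds.rpow (tendsto_const_div_atTop_nhds_zero_nat 1) (Or.inl hC.ne')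
  have hn1 : Tendsto (fun n : ℕ => ((n : ℝ) + 1) ^ (1 / (n : ℝ))) atTop (𝓝 1) := by
    refine ((tendsto_rpow_div_mul_add 1 1 (-1) zero_ne_one).comp
      (tendsto_atTop_add_const_right atTop 1 tendsto_natCast_atTop_atTop)).congr fun n => ?_
    simp
  have hupper : Tendsto (fun n : ℕ => (C ^ (1 / (n : ℝ)) * ((n : ℝ) + 1) ^ (1 / (n : ℝ))) ^ K * d)
      atTop (𝓝 d) := by
    simpa using ((hC1.mul hn1).pow K).mul_const d
  refine tendsto_of_tendsto_of_tendsto_of_le_of_le' tendsto_const_nhds hupper ?_ ?_ <;>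
    filter_upwards [eventually_ne_atTop 0] with n hn
  · calc d = (d ^ n) ^ (1 / (n : ℝ)) := (hroot hd hn).symm
      _ ≤ a n ^ (1 / (n : ℝ)) := Real.rpow_le_rpow (by positivity) (hlow n) (by positivity)
  · calc a n ^ (1 / (n : ℝ)) ≤ ((C * (n + 1)) ^ K * d ^ n) ^ (1 / (n : ℝ)) :=
          Real.rpow_le_rpow ((pow_nonneg hd n).trans (hlow n)) (hup n) (by positivity)
      _ = (C ^ (1 / (n : ℝ)) * ((n : ℝ) + 1) ^ (1 / (n : ℝ))) ^ K * d := by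
          rw [Real.mul_rpow (by positivity) (by positivity), hroot hd hn,
            ← Real.rpow_pow_comm (by positivity), Real.mul_rpow hC.le (by positivity)]

/-- Let `f` be a triangular tuple of polynomials over a field `k` whose
components are algebraically independent over `k`. Writing
`deg(f^∘n) := max_j totalDegree((f^∘n)ⱼ)`, the limit `lim_n (deg(f^∘n))^(1/n)` exists and
equals `max_i deg_{xᵢ}(fᵢ)`. -/
theorem tendsto_root_deg_iterComp
    {k : Type*} [Field k] {N : ℕ} (hN : 0 < N)
    (f : Fin N → MvPolynomial (Fin N) k)
    (hf : ∀ i j : Fin N, j < i → degreeOf j (f i) = 0)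
    (hfind : AlgebraicIndependent k f) :
    Filter.Tendsto
      (fun n : ℕ =>
        ((Finset.univ.sup fun j : Fin N => (iterComp f n j).totalDegree : ℕ) : ℝ)
          ^ (1 / (n : ℝ)))
      Filter.atTop
      (nhds ((Finset.univ.sup fun i : Fin N => degreeOf i (f i) : ℕ) : ℝ)) := by
  have : Nonempty (Fin N) := Fin.pos_iff_nonempty.mp hN
  have htri : IsTriangular f := hf
  have hd := htri.one_le_maxDiagDegreeOf hfind
  refine tendsto_rpow_one_div_of_pow_le_of_le (a := fun n => (maxTotalDegree (iterComp f n) : ℝ))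
    (C := maxTotalDegree f + 1) (K := N) (Nat.cast_nonneg _) (by positivity) (fun n => ?_)
    (fun n => ?_)
  · exact_mod_cast htri.pow_maxDiagDegreeOf_le hfind n
  · exact_mod_cast htri.maxTotalDegree_iterComp_le hd n
end

section
/- In the nonarchimedean triangular setting, for every point $P = (x_1,\dots,x_N) \in U$, writing $f(P) = (x_1^{(1)},\dots,x_N^{(1)})$, the first coordinate has the largest absolute value: $|x_1^{(1)}| = \max_{1 \le i \le N} |x_i^{(1)}|$. -/
open MvPolynomial

/-- The self-map of `K^N` defined by evaluating a tuple of polynomials. -/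
noncomputable def triMap {K : Type*} [Field K] {N : ℕ}
    (f : Fin N → MvPolynomial (Fin N) K) (x : Fin N → K) : Fin N → K :=
  fun i => eval x (f i)

/-- The open set `U = {(x₁,…,x_N) : |xᵢ| > |xᵢ₊₁|^C for 1 ≤ i ≤ N-1, and |x_N| > 1}`
attached to a nonarchimedean absolute value `v` and a real constant `C`. -/
def triU {K : Type*} [Field K] {N : ℕ} (v : AbsoluteValue K ℝ) (C : ℝ) :
    Set (Fin N → K) :=
  {x | (∀ i j : Fin N, (j : ℕ) = (i : ℕ) + 1 → (v (x j)) ^ C < v (x i)) ∧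
       ∀ i : Fin N, (i : ℕ) = N - 1 → 1 < v (x i)}

private lemma triSum_le {K : Type*} [Field K] (v : AbsoluteValue K ℝ)
    (hv : IsNonarchimedean v) {β : Type*} (g : β → K) :
    ∀ (t : Finset β), t.Nonempty → ∃ b ∈ t, v (∑ i ∈ t, g i) ≤ v (g b) := by
  classical
  intro t
  induction t using Finset.induction_on with
  | empty => intro h; exact absurd h (by simp)
  | @insert a s has ih =>
    intro _
    rcases s.eq_empty_or_nonempty with rfl | hs
    · exact ⟨a, Finset.mem_insert_self a _, by simp⟩
    · obtain ⟨b, hb, hble⟩ := ih hs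
      rw [Finset.sum_insert has]
      rcases le_max_iff.mp (hv (g a) (∑ i ∈ s, g i)) with h | h
      · exact ⟨a, Finset.mem_insert_self a _, h⟩
      · exact ⟨b, Finset.mem_insert_of_mem hb, h.trans hble⟩

private lemma triAdd_eq {K : Type*} [Field K] (v : AbsoluteValue K ℝ)
    (hv : IsNonarchimedean v) {a b : K} (h : v b < v a) : v (a + b) = v a := by
  refine le_antisymm ((hv a b).trans (max_le le_rfl h.le)) ?_
  have h2 : v a ≤ max (v (a + b)) (v b) := by
    have h3 := hv (a + b) (-b)
    simpa [v.map_neg] using h3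
  rcases le_max_iff.mp h2 with h3 | h3
  · exact h3
  · exact absurd h3 (not_le.mpr h)

private lemma triProdSplit {M : Type*} [CommMonoid M] {N : ℕ} (i : Fin N) (g : Fin N → M) :
    ∏ k, g k = (∏ k ∈ Finset.univ.filter (fun k => k < i), g k) * g i *
      ∏ k ∈ Finset.univ.filter (fun k => i < k), g k := by
  classical
  have h1 : Finset.univ.filter (fun k : Fin N => ¬ k < i)
      = insert i (Finset.univ.filter (fun k => i < k)) := by
    ext k
    simp only [Finset.mem_filter, Finset.mem_univ, true_and, Finset.mem_insert, not_lt,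
      Fin.lt_def, Fin.le_def, Fin.ext_iff]
    omega
  rw [← Finset.prod_filter_mul_prod_filter_not Finset.univ (fun k => k < i) g, h1,
    Finset.prod_insert (by simp)]
  exact (mul_assoc _ _ _).symm

/-- In the nonarchimedean triangular setting, for every `P ∈ U`, the first
coordinate of `f(P)` has the largest absolute value:
`|x₁⁽¹⁾| = max_{1 ≤ i ≤ N} |xᵢ⁽¹⁾|`. -/
theorem abs_first_coord_eq_max
    {K : Type*} [Field K] (v : AbsoluteValue K ℝ) (hv : IsNonarchimedean v)
    {N : ℕ} (hN : 0 < N)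
    (f : Fin N → MvPolynomial (Fin N) K)
    (htri : ∀ i j : Fin N, j < i → degreeOf j (f i) = 0)
    (hcoeff : ∀ i : Fin N, ∀ m : Fin N →₀ ℕ, (f i).coeff m ≠ 0 → v ((f i).coeff m) = 1)
    (hdiag : ∀ i j : Fin N, (j : ℕ) = (i : ℕ) + 1 → degreeOf j (f j) < degreeOf i (f i))
    (C : ℝ) (hC : ∀ i j : Fin N, (N : ℝ) * (degreeOf i (f j) : ℝ) < C)
    (x : Fin N → K) (hx : x ∈ triU v C) :
    v (triMap f x ⟨0, hN⟩) =
      Finset.univ.sup' ⟨⟨0, hN⟩, Finset.mem_univ _⟩ (fun i : Fin N => v (triMap f x i)) := by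
  classical
  obtain ⟨hxs, hxl⟩ := hx
  set i0 : Fin N := ⟨0, hN⟩ with hi0def
  have hi0v : (i0 : ℕ) = 0 := rfl
  -- C is positive
  have hC0 : 0 < C := by
    have h1 := hC i0 i0
    have h2 : (0:ℝ) ≤ (N : ℝ) * (degreeOf i0 (f i0) : ℝ) := by positivity
    linarith
  -- every coordinate has absolute value > 1
  have hbigk : ∀ k : ℕ, ∀ i : Fin N, (i : ℕ) + k = N - 1 → 1 < v (x i) := by
    intro k
    induction k with
    | zero => intro i hi; exact hxl i (by omega)
    | succ k ih =>
      intro i hi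
      have hiN : (i : ℕ) + 1 < N := by omega
      have hj : 1 < v (x ⟨(i : ℕ) + 1, hiN⟩) := ih _ (by simp; omega)
      have h2 := hxs i ⟨(i : ℕ) + 1, hiN⟩ (by simp)
      have h3 : (1:ℝ) < v (x ⟨(i : ℕ) + 1, hiN⟩) ^ C :=
        (Real.one_lt_rpow_iff_of_pos (lt_trans one_pos hj)).mpr (Or.inl ⟨hj, hC0⟩)
      exact lt_trans h3 h2
  have hbig : ∀ i : Fin N, 1 < v (x i) := by
    intro i
    exact hbigk (N - 1 - (i : ℕ)) i (by have := i.isLt; omega)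
  have hvpos : ∀ i : Fin N, 0 < v (x i) := fun i => lt_trans one_pos (hbig i)
  refine le_antisymm (Finset.le_sup' (fun i : Fin N => v (triMap f x i)) (Finset.mem_univ i0)) (Finset.sup'_le _ _ ?_)
  intro j _
  by_cases hj0 : j = i0
  · rw [hj0]
  -- now j ≠ 0, hence N ≥ 2
  have hj1 : 0 < (j : ℕ) := by
    by_contra h
    exact hj0 (Fin.ext (by omega))
  have hN2 : 2 ≤ N := by have := j.isLt; omega
  set d00 : ℕ := degreeOf i0 (f i0) with hd00def
  have hi1N : (1 : ℕ) < N := by omega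
  have hd1 : degreeOf (⟨1, hi1N⟩ : Fin N) (f ⟨1, hi1N⟩) < d00 := hdiag i0 ⟨1, hi1N⟩ (by simp [hi0v])
  have hd00 : 1 ≤ d00 := by omega
  -- C > 1
  have hC1 : 1 < C := by
    have h1 := hC i0 i0
    have h2 : (N : ℝ) ≤ (N : ℝ) * (d00 : ℝ) := by
      have : (1:ℝ) ≤ (d00 : ℝ) := by exact_mod_cast hd00
      nlinarith [Nat.cast_nonneg (α := ℝ) N]
    have h3 : (2:ℝ) ≤ (N : ℝ) := by exact_mod_cast hN2
    rw [← hd00def] at h1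
    linarith
  -- adjacent strict decrease and general weak decrease of |x i|
  have hadj : ∀ i j' : Fin N, (j' : ℕ) = (i : ℕ) + 1 → v (x j') < v (x i) := by
    intro i j' hij
    have h1 : v (x j') = v (x j') ^ (1:ℝ) := (Real.rpow_one _).symm
    have h2 : v (x j') ^ (1:ℝ) < v (x j') ^ C := (Real.rpow_lt_rpow_left_iff (hbig j')).mpr hC1
    rw [h1]
    exact lt_trans h2 (hxs i j' hij)
  have hdeck : ∀ k : ℕ, ∀ i j' : Fin N, (j' : ℕ) = (i : ℕ) + k → v (x j') ≤ v (x i) := by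
    intro k
    induction k with
    | zero => intro i j' h; have : j' = i := Fin.ext (by omega); rw [this]
    | succ k ih =>
      intro i j' h
      have hiN : (i : ℕ) + 1 < N ∨ k = 0 ∧ (j' : ℕ) = (i : ℕ) + 1 := by
        have := j'.isLt; omega
      rcases hiN with hiN | ⟨-, h2⟩
      · exact le_trans (ih ⟨(i : ℕ) + 1, hiN⟩ j' (by simp; omega)) (hadj i ⟨(i : ℕ) + 1, hiN⟩ (by simp)).le
      · exact (hadj i j' h2).le
  have hdecs : ∀ i j' : Fin N, (i : ℕ) ≤ (j' : ℕ) → v (x j') ≤ v (x i) :=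
    fun i j' h => hdeck ((j' : ℕ) - (i : ℕ)) i j' (by omega)
  -- diagonal degrees strictly decrease
  have hddk : ∀ k : ℕ, ∀ i j' : Fin N, (j' : ℕ) = (i : ℕ) + k + 1 →
      degreeOf j' (f j') < degreeOf i (f i) := by
    intro k
    induction k with
    | zero => intro i j' h; exact hdiag i j' (by omega)
    | succ k ih =>
      intro i j' h
      have hiN : (i : ℕ) + 1 < N := by have := j'.isLt; omega
      exact lt_trans (ih ⟨(i : ℕ) + 1, hiN⟩ j' (by simp; omega)) (hdiag i ⟨(i : ℕ) + 1, hiN⟩ (by simp))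
  -- total degree sum bound for support monomials
  have hsumC : ∀ (jj : Fin N) (m : Fin N →₀ ℕ), m ∈ (f jj).support →
      ((∑ k, m k : ℕ) : ℝ) < C := by
    intro jj m hm
    obtain ⟨k0, -, hk0⟩ := Finset.exists_max_image Finset.univ
      (fun k => degreeOf k (f jj)) ⟨i0, Finset.mem_univ _⟩
    have h1 : ∑ k, m k ≤ N * degreeOf k0 (f jj) := by
      calc ∑ k, m k ≤ ∑ k : Fin N, degreeOf k (f jj) :=
            Finset.sum_le_sum (fun k _ => monomial_le_degreeOf k hm)
        _ ≤ Finset.univ.card • degreeOf k0 (f jj) :=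
            Finset.sum_le_card_nsmul _ _ _ (fun k _ => hk0 k (Finset.mem_univ k))
        _ = N * degreeOf k0 (f jj) := by simp [Finset.card_univ, smul_eq_mul]
    calc ((∑ k, m k : ℕ) : ℝ) ≤ ((N * degreeOf k0 (f jj) : ℕ) : ℝ) := by exact_mod_cast h1
      _ = (N : ℝ) * (degreeOf k0 (f jj) : ℝ) := by push_cast; ring
      _ < C := hC k0 jj
  -- tail product bound
  have htail : ∀ (m : Fin N → ℕ), ((∑ k, m k : ℕ) : ℝ) < C → ∀ i : Fin N,
      ∏ k ∈ Finset.univ.filter (fun k => i < k), v (x k) ^ m k < v (x i) := by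
    intro m hm i
    by_cases hiN : (i : ℕ) + 1 < N
    · set s : Fin N := ⟨(i : ℕ) + 1, hiN⟩ with hs
      have h1 : ∏ k ∈ Finset.univ.filter (fun k => i < k), v (x k) ^ m k
          ≤ ∏ k ∈ Finset.univ.filter (fun k => i < k), v (x s) ^ m k := by
        refine Finset.prod_le_prod (fun k _ => by positivity) ?_
        intro k hk
        refine pow_le_pow_left₀ (v.nonneg _) (hdecs s k ?_) _
        simp only [Finset.mem_filter, Finset.mem_univ, true_and, Fin.lt_def] at hk
        simp only [hs]
        omega
      have h2 : ∏ k ∈ Finset.univ.filter (fun k => i < k), v (x s) ^ m k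
          = v (x s) ^ (∑ k ∈ Finset.univ.filter (fun k => i < k), m k) :=
        Finset.prod_pow_eq_pow_sum _ _ _
      have h3 : v (x s) ^ (∑ k ∈ Finset.univ.filter (fun k => i < k), m k)
          ≤ v (x s) ^ (∑ k, m k) :=
        pow_le_pow_right₀ (hbig s).le
          (Finset.sum_le_sum_of_subset (Finset.filter_subset _ _))
      have h4 : v (x s) ^ (∑ k, m k) < v (x i) := by
        have h5 : v (x s) ^ ((∑ k, m k : ℕ) : ℝ) < v (x s) ^ C :=
          (Real.rpow_lt_rpow_left_iff (hbig s)).mpr hm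
        rw [Real.rpow_natCast] at h5
        exact lt_trans h5 (hxs i s (by simp [hs]))
      calc ∏ k ∈ Finset.univ.filter (fun k => i < k), v (x k) ^ m k
          ≤ v (x s) ^ (∑ k ∈ Finset.univ.filter (fun k => i < k), m k) := h2 ▸ h1
        _ ≤ v (x s) ^ (∑ k, m k) := h3
        _ < v (x i) := h4
    · have hempty : Finset.univ.filter (fun k : Fin N => i < k) = (∅ : Finset (Fin N)) := by
        ext k
        simp only [Finset.mem_filter, Finset.mem_univ, true_and, Finset.notMem_empty,
          iff_false, not_lt, Fin.le_def]
        have := k.isLt; omega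
      rw [hempty]
      simpa using hbig i
  -- strict comparison of monomial values
  have hvlt : ∀ (m m' : Fin N →₀ ℕ), ((∑ k, m' k : ℕ) : ℝ) < C →
      ∀ i : Fin N, (∀ k, k < i → m k = m' k) → m' i < m i →
      ∏ k, v (x k) ^ m' k < ∏ k, v (x k) ^ m k := by
    intro m m' hm' i heq hlt
    rw [triProdSplit i (fun k => v (x k) ^ m k), triProdSplit i (fun k => v (x k) ^ m' k)]
    have hA : ∏ k ∈ Finset.univ.filter (fun k => k < i), v (x k) ^ m' k
        = ∏ k ∈ Finset.univ.filter (fun k => k < i), v (x k) ^ m k := by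
      refine Finset.prod_congr rfl (fun k hk => ?_)
      simp only [Finset.mem_filter, Finset.mem_univ, true_and] at hk
      rw [heq k hk]
    rw [hA]
    set A := ∏ k ∈ Finset.univ.filter (fun k => k < i), v (x k) ^ m k with hAdef
    have hApos : 0 < A := Finset.prod_pos (fun k _ => pow_pos (hvpos k) _)
    have hB1 : (1:ℝ) ≤ ∏ k ∈ Finset.univ.filter (fun k => i < k), v (x k) ^ m k := by
      calc (1:ℝ) = ∏ _k ∈ Finset.univ.filter (fun k => i < k), (1:ℝ) := by simp
        _ ≤ ∏ k ∈ Finset.univ.filter (fun k => i < k), v (x k) ^ m k :=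
          Finset.prod_le_prod (fun k _ => zero_le_one) (fun k _ => one_le_pow₀ (hbig k).le)
    have hB' : ∏ k ∈ Finset.univ.filter (fun k => i < k), v (x k) ^ m' k < v (x i) :=
      htail (fun k => m' k) hm' i
    calc A * v (x i) ^ m' i * ∏ k ∈ Finset.univ.filter (fun k => i < k), v (x k) ^ m' k
        < A * v (x i) ^ m' i * v (x i) :=
          mul_lt_mul_of_pos_left hB' (mul_pos hApos (pow_pos (hvpos i) _))
      _ = A * v (x i) ^ (m' i + 1) := by rw [mul_assoc, ← pow_succ]
      _ ≤ A * v (x i) ^ m i :=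
          mul_le_mul_of_nonneg_left (pow_le_pow_right₀ (hbig i).le hlt) hApos.le
      _ ≤ A * v (x i) ^ m i * ∏ k ∈ Finset.univ.filter (fun k => i < k), v (x k) ^ m k :=
          le_mul_of_one_le_right (by positivity) hB1
  -- value of a term of `f jj`
  have hterm : ∀ (jj : Fin N) (m : Fin N →₀ ℕ), m ∈ (f jj).support →
      v ((f jj).coeff m * ∏ k, x k ^ m k) = ∏ k, v (x k) ^ m k := by
    intro jj m hm
    rw [map_mul, hcoeff jj m (by rwa [MvPolynomial.mem_support_iff] at hm), one_mul,
      map_prod]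
    exact Finset.prod_congr rfl (fun k _ => map_pow v _ _)
  -- lower bound for v (eval x (f i0))
  have hne0 : (f i0).support.Nonempty := by
    rw [MvPolynomial.support_nonempty]
    intro h
    have h2 : d00 = 0 := by rw [hd00def, h]; simp
    omega
  obtain ⟨mstar, hmstar, hmax⟩ := Finset.exists_max_image (f i0).support
    (fun m => ∏ k, v (x k) ^ m k) hne0
  have hstrict : ∀ m ∈ (f i0).support, m ≠ mstar →
      ∏ k, v (x k) ^ m k < ∏ k, v (x k) ^ mstar k := by
    intro m hm hne
    have hd : (Finset.univ.filter (fun k => m k ≠ mstar k)).Nonempty := by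
      by_contra h
      rw [Finset.not_nonempty_iff_eq_empty] at h
      refine hne (Finsupp.ext fun k => ?_)
      by_contra hk
      have : k ∈ Finset.univ.filter (fun k => m k ≠ mstar k) := by
        simp [hk]
      rw [h] at this
      exact absurd this (Finset.notMem_empty k)
    set i := (Finset.univ.filter (fun k => m k ≠ mstar k)).min' hd with hidef
    have hi_mem : i ∈ Finset.univ.filter (fun k => m k ≠ mstar k) := Finset.min'_mem _ hd
    have hii : m i ≠ mstar i := by
      simpa using hi_mem
    have heq : ∀ k, k < i → m k = mstar k := by
      intro k hk
      by_contra hkne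
      have hk2 : k ∈ Finset.univ.filter (fun k => m k ≠ mstar k) := by simp [hkne]
      exact absurd (Finset.min'_le _ k hk2) (not_le.mpr hk)
    rcases lt_or_gt_of_ne hii with h | h
    · exact hvlt mstar m (hsumC i0 m hm) i (fun k hk => (heq k hk).symm) h
    · exact absurd (hvlt m mstar (hsumC i0 mstar hmstar) i heq h)
        (not_lt.mpr (hmax m hm))
  have hevalm : v (eval x (f i0)) = ∏ k, v (x k) ^ mstar k := by
    rw [eval_eq']
    rw [← Finset.add_sum_erase _ _ hmstar]
    rcases ((f i0).support.erase mstar).eq_empty_or_nonempty with he | he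
    · rw [he, Finset.sum_empty, add_zero]
      exact hterm i0 mstar hmstar
    · have hrest : v (∑ m ∈ (f i0).support.erase mstar,
          (f i0).coeff m * ∏ k, x k ^ m k) < v ((f i0).coeff mstar * ∏ k, x k ^ mstar k) := by
        obtain ⟨b, hb, hble⟩ := triSum_le v hv _ _ he
        have hbs : b ∈ (f i0).support := Finset.mem_of_mem_erase hb
        have hbne : b ≠ mstar := Finset.ne_of_mem_erase hb
        calc v (∑ m ∈ (f i0).support.erase mstar, (f i0).coeff m * ∏ k, x k ^ m k)
            ≤ v ((f i0).coeff b * ∏ k, x k ^ b k) := hble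
          _ = ∏ k, v (x k) ^ b k := hterm i0 b hbs
          _ < ∏ k, v (x k) ^ mstar k := hstrict b hbs hbne
          _ = v ((f i0).coeff mstar * ∏ k, x k ^ mstar k) := (hterm i0 mstar hmstar).symm
      rw [triAdd_eq v hv hrest]
      exact hterm i0 mstar hmstar
  have hlow : v (x i0) ^ d00 ≤ v (eval x (f i0)) := by
    obtain ⟨md, hmd_mem, hmd⟩ := Finset.exists_mem_eq_sup (f i0).support hne0 (fun m => m i0)
    have hmd0 : md i0 = d00 := by
      rw [hd00def, degreeOf_eq_sup, hmd]
    have h1 : v (x i0) ^ d00 ≤ ∏ k, v (x k) ^ md k := by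
      rw [← hmd0]
      have hA1 : ∏ k ∈ Finset.univ.filter (fun k => k < i0), v (x k) ^ md k = 1 := by
        refine Finset.prod_eq_one (fun k hk => ?_)
        simp only [Finset.mem_filter, Finset.mem_univ, true_and, Fin.lt_def, hi0v] at hk
        omega
      have hB1 : (1:ℝ) ≤ ∏ k ∈ Finset.univ.filter (fun k => i0 < k), v (x k) ^ md k := by
        calc (1:ℝ) = ∏ _k ∈ Finset.univ.filter (fun k => i0 < k), (1:ℝ) := by simp
          _ ≤ ∏ k ∈ Finset.univ.filter (fun k => i0 < k), v (x k) ^ md k :=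
            Finset.prod_le_prod (fun k _ => zero_le_one) (fun k _ => one_le_pow₀ (hbig k).le)
      rw [triProdSplit i0 (fun k => v (x k) ^ md k), hA1, one_mul]
      exact le_mul_of_one_le_right (pow_pos (hvpos i0) _).le hB1
    rw [hevalm]
    exact le_trans h1 (hmax md hmd_mem)
  -- upper bound for v (eval x (f j))
  have hup : v (eval x (f j)) ≤ v (x i0) ^ d00 := by
    rcases (f j).support.eq_empty_or_nonempty with hs | hs
    · have hfj : f j = 0 := by
        rwa [← MvPolynomial.support_eq_empty]
      rw [hfj]
      simp
    · have heval : eval x (f j) = ∑ m ∈ (f j).support, (f j).coeff m * ∏ k, x k ^ m k :=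
        eval_eq' x (f j)
      obtain ⟨m, hm, hle⟩ := triSum_le v hv (fun m => (f j).coeff m * ∏ k, x k ^ m k) _ hs
      rw [heval]
      have hm0 : ∀ k, k < j → m k = 0 := by
        intro k hk
        have h1 : m k ≤ degreeOf k (f j) := monomial_le_degreeOf k hm
        rw [htri j k hk] at h1
        omega
      have hA1 : ∏ k ∈ Finset.univ.filter (fun k => k < j), v (x k) ^ m k = 1 := by
        refine Finset.prod_eq_one (fun k hk => ?_)
        simp only [Finset.mem_filter, Finset.mem_univ, true_and] at hk
        rw [hm0 k hk, pow_zero]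
      have hval : ∏ k, v (x k) ^ m k
          = v (x j) ^ m j * ∏ k ∈ Finset.univ.filter (fun k => j < k), v (x k) ^ m k := by
        rw [triProdSplit j (fun k => v (x k) ^ m k), hA1, one_mul]
      have hBlt : ∏ k ∈ Finset.univ.filter (fun k => j < k), v (x k) ^ m k < v (x j) :=
        htail (fun k => m k) (hsumC j m hm) j
      have hmj : m j + 1 ≤ d00 := by
        have h1 : m j ≤ degreeOf j (f j) := monomial_le_degreeOf j hm
        have h2 : degreeOf j (f j) < d00 := hddk ((j : ℕ) - 1) i0 j (by omega)
        omega
      calc v (∑ m ∈ (f j).support, (f j).coeff m * ∏ k, x k ^ m k)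
          ≤ v ((f j).coeff m * ∏ k, x k ^ m k) := hle
        _ = ∏ k, v (x k) ^ m k := hterm j m hm
        _ = v (x j) ^ m j * ∏ k ∈ Finset.univ.filter (fun k => j < k), v (x k) ^ m k := hval
        _ ≤ v (x j) ^ m j * v (x j) := by
            refine mul_le_mul_of_nonneg_left hBlt.le (by positivity)
        _ = v (x j) ^ (m j + 1) := by rw [← pow_succ]
        _ ≤ v (x j) ^ d00 := pow_le_pow_right₀ (hbig j).le hmj
        _ ≤ v (x i0) ^ d00 := pow_le_pow_left₀ (v.nonneg _) (hdecs i0 j (by omega)) _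
  simp only [triMap]
  exact le_trans hup hlow
end
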